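/- arXiv:1408.6706 — 2 statements merged into one kernel-verified Lean document; each statement's English description precedes it below -/
import Mathlib

section
/- Let (S,R) be an argumentation network, V₀ : S → [0,1] an initial assignment, and (V_i) the Gabbay-Rodrigues iteration sequence from V₀; suppose the sequence is stable at iteration k. Then for every X ∈ S: (1) if V_k(Y) = 0 for all Y ∈ Att(X), then V_i(X) → 1 as i → ∞; (2) if V_k(Y) = 1 for some Y ∈ Att(X), then V_i(X) → 0 as i → ∞; (3) if V_k(X) ∈ {0,1}, then V_i(X) → V_k(X) as i → ∞. -/
open Filter Topology

variable {S : Type*}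

/-- Maximum of `V` over the attackers of `X` (i.e. `{Y | R Y X}`),
with the convention that the maximum over the empty set is `0`. -/
noncomputable def attMax [Fintype S] (R : S → S → Prop) [DecidableRel R] (V : S → ℝ) (X : S) : ℝ :=
  (Finset.univ.filter (fun Y => R Y X)).fold max 0 V

/-- One step of the Gabbay-Rodrigues iteration. -/
noncomputable def grStep [Fintype S] (R : S → S → Prop) [DecidableRel R] (V : S → ℝ) (X : S) : ℝ :=
  (1 - V X) * min (1/2) (1 - attMax R V X) + V X * max (1/2) (1 - attMax R V X)

/-- The Gabbay-Rodrigues iteration sequence from the initial assignment `V0`. -/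
noncomputable def grSeq [Fintype S] (R : S → S → Prop) [DecidableRel R] (V0 : S → ℝ) : ℕ → S → ℝ
  | 0 => V0
  | i + 1 => grStep R (grSeq R V0 i)

def inSet (V : S → ℝ) : Set S := {X | V X = 1}

def outSet (V : S → ℝ) : Set S := {X | V X = 0}

def conflictFree (R : S → S → Prop) (E : Set S) : Prop := ∀ X ∈ E, ∀ Y ∈ E, ¬ R X Y

def acceptable (R : S → S → Prop) (E : Set S) (X : S) : Prop := ∀ Y, R Y X → ∃ Z ∈ E, R Z Y

def admissible (R : S → S → Prop) (E : Set S) : Prop :=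
  conflictFree R E ∧ ∀ X ∈ E, acceptable R E X

def completeExt (R : S → S → Prop) (E : Set S) : Prop :=
  admissible R E ∧ ∀ X, acceptable R E X → X ∈ E

/-- `E⁺` : the set of arguments attacked by `E`. -/
def plusSet (R : S → S → Prop) (E : Set S) : Set S := {X | ∃ Y ∈ E, R Y X}

/-- The GR sequence is stable at iteration `k` if every node with a crisp value at
iteration `k` keeps that value at iteration `k+1`. -/
def grStable [Fintype S] (R : S → S → Prop) [DecidableRel R] (V0 : S → ℝ) (k : ℕ) : Prop :=
  ∀ X : S, (grSeq R V0 k X = 0 ∨ grSeq R V0 k X = 1) → grSeq R V0 (k + 1) X = grSeq R V0 k X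

section Aux
variable [Fintype S] (R : S → S → Prop) [DecidableRel R]

lemma attMax_nonneg (V : S → ℝ) (X : S) : 0 ≤ attMax R V X :=
  (Finset.le_fold_max _).2 (Or.inl le_rfl)

lemma attMax_le_one (V : S → ℝ) (h : ∀ Y, V Y ≤ 1) (X : S) : attMax R V X ≤ 1 :=
  (Finset.fold_max_le _).2 ⟨zero_le_one, fun x _ => h x⟩

lemma le_attMax (V : S → ℝ) {X Y : S} (h : R Y X) : V Y ≤ attMax R V X :=
  (Finset.le_fold_max _).2 (Or.inr ⟨Y, by simp [h], le_rfl⟩)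

lemma attMax_eq_zero_of (V : S → ℝ) (X : S) (h : ∀ Y, R Y X → V Y = 0) :
    attMax R V X = 0 :=
  le_antisymm ((Finset.fold_max_le _).2 ⟨le_rfl, fun x hx => by
    simp only [Finset.mem_filter] at hx; exact le_of_eq (h x hx.2)⟩) (attMax_nonneg R V X)

lemma attMax_eq_one_of (V : S → ℝ) {X Y : S} (hY : R Y X) (hV : V Y = 1)
    (h1 : ∀ Z, V Z ≤ 1) : attMax R V X = 1 :=
  le_antisymm (attMax_le_one R V h1 X) (hV ▸ le_attMax R V hY)

lemma attMax_eq_one_exists (V : S → ℝ) (X : S) (h1 : ∀ Z, V Z ≤ 1)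
    (h : attMax R V X = 1) : ∃ Y, R Y X ∧ V Y = 1 := by
  have := (Finset.le_fold_max (b := (0:ℝ)) (f := V)
    (s := Finset.univ.filter (fun Y => R Y X)) 1).1 (le_of_eq h.symm)
  rcases this with h0 | ⟨Y, hY, hle⟩
  · norm_num at h0
  · simp only [Finset.mem_filter] at hY
    exact ⟨Y, hY.2, le_antisymm (h1 Y) hle⟩

lemma grStep_mem (V : S → ℝ) (hV : ∀ Y, V Y ∈ Set.Icc (0:ℝ) 1) (X : S) :
    grStep R V X ∈ Set.Icc (0:ℝ) 1 := by
  have hA0 := attMax_nonneg R V X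
  have hA1 := attMax_le_one R V (fun Y => (hV Y).2) X
  have hv0 := (hV X).1
  have hv1 := (hV X).2
  have hm0 : (0:ℝ) ≤ min (1/2) (1 - attMax R V X) := le_min (by norm_num) (by linarith)
  have hm1 : min (1/2) (1 - attMax R V X) ≤ 1 := min_le_of_left_le (by norm_num)
  have hM0 : (0:ℝ) ≤ max (1/2) (1 - attMax R V X) := le_max_of_le_left (by norm_num)
  have hM1 : max (1/2) (1 - attMax R V X) ≤ 1 := max_le (by norm_num) (by linarith)
  unfold grStep
  constructor
  · have := mul_nonneg (by linarith : (0:ℝ) ≤ 1 - V X) hm0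
    have := mul_nonneg hv0 hM0
    linarith
  · nlinarith

lemma grStep_eq_zero_iff (V : S → ℝ) (hV : ∀ Y, V Y ∈ Set.Icc (0:ℝ) 1) (X : S) :
    grStep R V X = 0 ↔ V X = 0 ∧ attMax R V X = 1 := by
  have hA0 := attMax_nonneg R V X
  have hA1 := attMax_le_one R V (fun Y => (hV Y).2) X
  have hv0 := (hV X).1
  have hv1 := (hV X).2
  have hm0 : (0:ℝ) ≤ min (1/2) (1 - attMax R V X) := le_min (by norm_num) (by linarith)
  have hM0 : (1/2:ℝ) ≤ max (1/2) (1 - attMax R V X) := le_max_left _ _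
  constructor
  · intro h
    unfold grStep at h
    have h1 : (1 - V X) * min (1/2) (1 - attMax R V X) ≥ 0 :=
      mul_nonneg (by linarith) hm0
    have h2 : V X * max (1/2) (1 - attMax R V X) ≥ 0 :=
      mul_nonneg hv0 (by linarith)
    have hvz : V X = 0 := by nlinarith
    have hmz : min (1/2) (1 - attMax R V X) = 0 := by
      rw [hvz] at h; simpa using h
    rcases min_cases (1/2:ℝ) (1 - attMax R V X) with ⟨he, _⟩ | ⟨he, _⟩ <;>
      rw [he] at hmz <;> [norm_num at hmz; constructor] <;> [exact hvz; linarith]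
  · rintro ⟨hv, hA⟩
    unfold grStep
    rw [hv, hA]; norm_num

lemma grStep_eq_one_iff (V : S → ℝ) (hV : ∀ Y, V Y ∈ Set.Icc (0:ℝ) 1) (X : S) :
    grStep R V X = 1 ↔ V X = 1 ∧ attMax R V X = 0 := by
  have hA0 := attMax_nonneg R V X
  have hA1 := attMax_le_one R V (fun Y => (hV Y).2) X
  have hv0 := (hV X).1
  have hv1 := (hV X).2
  have hm1 : min (1/2) (1 - attMax R V X) ≤ 1/2 := min_le_left _ _
  have hm0 : (0:ℝ) ≤ min (1/2) (1 - attMax R V X) := le_min (by norm_num) (by linarith)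
  have hM1 : max (1/2) (1 - attMax R V X) ≤ 1 := max_le (by norm_num) (by linarith)
  constructor
  · intro h
    unfold grStep at h
    have hv : V X = 1 := by nlinarith
    have hMz : max (1/2) (1 - attMax R V X) = 1 := by
      rw [hv] at h; simpa using h
    rcases max_cases (1/2:ℝ) (1 - attMax R V X) with ⟨he, _⟩ | ⟨he, _⟩ <;>
      rw [he] at hMz <;> [norm_num at hMz; constructor] <;> [exact hv; linarith]
  · rintro ⟨hv, hA⟩
    unfold grStep
    rw [hv, hA]; norm_num

end Aux

theorem stmt14 [Fintype S] [Nonempty S] (R : S → S → Prop) [DecidableRel R]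
    (V0 : S → ℝ) (hV0 : ∀ X, V0 X ∈ Set.Icc (0:ℝ) 1)
    (k : ℕ) (hstab : grStable R V0 k) :
    ∀ X : S,
      ((∀ Y, R Y X → grSeq R V0 k Y = 0) →
        Tendsto (fun i => grSeq R V0 i X) atTop (nhds 1)) ∧
      ((∃ Y, R Y X ∧ grSeq R V0 k Y = 1) →
        Tendsto (fun i => grSeq R V0 i X) atTop (nhds 0)) ∧
      ((grSeq R V0 k X = 0 ∨ grSeq R V0 k X = 1) →
        Tendsto (fun i => grSeq R V0 i X) atTop (nhds (grSeq R V0 k X))) := by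
    -- all iterates lie in [0,1]
  have hmem : ∀ i X, grSeq R V0 i X ∈ Set.Icc (0:ℝ) 1 := by
    intro i
    induction i with
    | zero => exact hV0
    | succ n ih => exact fun X => grStep_mem R (grSeq R V0 n) ih X
  have hle1 : ∀ i Z, grSeq R V0 i Z ≤ 1 := fun i Z => (hmem i Z).2
  -- persistence of crisp values
  have persist : ∀ d X,
      (grSeq R V0 k X = 0 → grSeq R V0 (k + d) X = 0) ∧
      (grSeq R V0 k X = 1 → grSeq R V0 (k + d) X = 1) := by
    intro d
    induction d with
    | zero => intro X; simp
    | succ n ih =>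
      intro X
      constructor
      · intro h0
        have hst := hstab X (Or.inl h0)
        rw [h0] at hst
        have hch := (grStep_eq_zero_iff R (grSeq R V0 k) (hmem k) X).1 hst
        obtain ⟨Y, hYX, hY1⟩ := attMax_eq_one_exists R (grSeq R V0 k) X (hle1 k) hch.2
        have hYn : grSeq R V0 (k + n) Y = 1 := (ih Y).2 hY1
        have : grSeq R V0 (k + n + 1) X = 0 :=
          (grStep_eq_zero_iff R (grSeq R V0 (k + n)) (hmem (k + n)) X).2
            ⟨(ih X).1 h0, attMax_eq_one_of R _ hYX hYn (hle1 (k + n))⟩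
        exact this
      · intro h1
        have hst := hstab X (Or.inr h1)
        rw [h1] at hst
        have hch := (grStep_eq_one_iff R (grSeq R V0 k) (hmem k) X).1 hst
        have hall : ∀ Y, R Y X → grSeq R V0 (k + n) Y = 0 := by
          intro Y hY
          have : grSeq R V0 k Y = 0 :=
            le_antisymm (hch.2 ▸ le_attMax R _ hY) (hmem k Y).1
          exact (ih Y).1 this
        have : grSeq R V0 (k + n + 1) X = 1 :=
          (grStep_eq_one_iff R (grSeq R V0 (k + n)) (hmem (k + n)) X).2
            ⟨(ih X).2 h1, attMax_eq_zero_of R _ X hall⟩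
        exact this
  intro X
  refine ⟨?_, ?_, ?_⟩
  · -- all attackers 0 at k
    intro hatt
    have key : ∀ d, grSeq R V0 (k + d) X = 1 - (1 - grSeq R V0 k X) * (1/2)^d := by
      intro d
      induction d with
      | zero => rw [Nat.add_zero, pow_zero]; ring
      | succ n ih =>
        have hall : ∀ Y, R Y X → grSeq R V0 (k + n) Y = 0 :=
          fun Y hY => (persist n Y).1 (hatt Y hY)
        have hA : attMax R (grSeq R V0 (k + n)) X = 0 := attMax_eq_zero_of R _ X hall
        have : grSeq R V0 (k + n + 1) X = grStep R (grSeq R V0 (k + n)) X := rfl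
        rw [show k + (n+1) = k + n + 1 from rfl, this]
        unfold grStep
        rw [hA, ih]
        norm_num
        ring
    rw [← tendsto_add_atTop_iff_nat k]
    have hlim : Tendsto (fun n : ℕ => 1 - (1 - grSeq R V0 k X) * (1/2:ℝ)^n) atTop (nhds 1) := by
      have hp : Tendsto (fun n : ℕ => ((1:ℝ)/2)^n) atTop (nhds 0) :=
        tendsto_pow_atTop_nhds_zero_of_lt_one (by norm_num) (by norm_num)
      have h2 : Tendsto (fun n : ℕ => (1 - grSeq R V0 k X) * (1/2:ℝ)^n) atTop (nhds 0) := by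
        simpa using hp.const_mul (1 - grSeq R V0 k X)
      simpa using Tendsto.const_sub 1 h2
    refine hlim.congr fun n => ?_
    rw [show n + k = k + n from Nat.add_comm n k, key n]
  · -- some attacker 1 at k
    rintro ⟨Y, hYX, hY1⟩
    have key : ∀ d, grSeq R V0 (k + d) X = grSeq R V0 k X * (1/2)^d := by
      intro d
      induction d with
      | zero => rw [Nat.add_zero, pow_zero]; ring
      | succ n ih =>
        have hYn : grSeq R V0 (k + n) Y = 1 := (persist n Y).2 hY1
        have hA : attMax R (grSeq R V0 (k + n)) X = 1 :=
          attMax_eq_one_of R _ hYX hYn (hle1 (k + n))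
        have : grSeq R V0 (k + n + 1) X = grStep R (grSeq R V0 (k + n)) X := rfl
        rw [show k + (n+1) = k + n + 1 from rfl, this]
        unfold grStep
        rw [hA, ih]
        norm_num
        ring
    rw [← tendsto_add_atTop_iff_nat k]
    have hlim : Tendsto (fun n : ℕ => grSeq R V0 k X * (1/2:ℝ)^n) atTop (nhds 0) := by
      have hp : Tendsto (fun n : ℕ => ((1:ℝ)/2)^n) atTop (nhds 0) :=
        tendsto_pow_atTop_nhds_zero_of_lt_one (by norm_num) (by norm_num)
      simpa using hp.const_mul (grSeq R V0 k X)
    refine hlim.congr fun n => ?_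
    rw [show n + k = k + n from Nat.add_comm n k, key n]
  · -- crisp value persists
    intro hcrisp
    rw [← tendsto_add_atTop_iff_nat k]
    have key : ∀ n, grSeq R V0 (n + k) X = grSeq R V0 k X := by
      intro n
      rw [Nat.add_comm n k]
      rcases hcrisp with h | h
      · rw [(persist n X).1 h, h]
      · rw [(persist n X).2 h, h]
    refine tendsto_const_nhds.congr fun n => (key n).symm
end

section
/- Let (S,R) be an argumentation network, V₀ : S → [0,1] an initial assignment, and (V_i) the Gabbay-Rodrigues iteration sequence from V₀. Suppose that for every Z ∈ S the sequence V_i(Z) converges to a limit V_e(Z). Then for every X ∈ S: (1) if V_e(Y) = 0 for all Y ∈ Att(X), then V_e(X) = 1; and (2) if V_e(Y) = 1 for some Y ∈ Att(X), then V_e(X) = 0. -/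
open Filter Topology

variable {S : Type*}

lemma fold_max_tendsto' {S : Type*} (s : Finset S) (f : ℕ → S → ℝ) (g : S → ℝ)
    (h : ∀ x ∈ s, Filter.Tendsto (fun i => f i x) Filter.atTop (nhds (g x))) :
    Filter.Tendsto (fun i => s.fold max 0 (f i)) Filter.atTop (nhds (s.fold max 0 g)) := by
  classical
  induction s using Finset.induction with
  | empty => simpa using tendsto_const_nhds
  | @insert a t ha ih =>
    simp only [Finset.fold_insert ha]
    exact (h _ (Finset.mem_insert_self _ _)).max
      (ih fun x hx => h x (Finset.mem_insert_of_mem hx))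

lemma attMax_mem {S : Type*} [Fintype S] (R : S → S → Prop) [DecidableRel R]
    (V : S → ℝ) (hV : ∀ X, V X ∈ Set.Icc (0:ℝ) 1) (X : S) :
    attMax R V X ∈ Set.Icc (0:ℝ) 1 := by
  constructor
  · exact (Finset.le_fold_max _).mpr (Or.inl le_rfl)
  · exact (Finset.fold_max_le _).mpr ⟨zero_le_one, fun x _ => (hV x).2⟩

lemma grSeq_mem {S : Type*} [Fintype S] (R : S → S → Prop) [DecidableRel R]
    (V0 : S → ℝ) (hV0 : ∀ X, V0 X ∈ Set.Icc (0:ℝ) 1) :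
    ∀ i X, grSeq R V0 i X ∈ Set.Icc (0:ℝ) 1 := by
  intro i
  induction i with
  | zero => exact hV0
  | succ n ih =>
    intro X
    have hM := attMax_mem R (grSeq R V0 n) ih X
    have hv := ih X
    simp only [grSeq, grStep]
    set v := grSeq R V0 n X
    set M := attMax R (grSeq R V0 n) X
    have h1 : (0:ℝ) ≤ min (1/2) (1 - M) := le_min (by norm_num) (by linarith [hM.2])
    have h2 : min (1/2:ℝ) (1 - M) ≤ 1 := le_trans (min_le_left _ _) (by norm_num)
    have h3 : (0:ℝ) ≤ max (1/2) (1 - M) := le_trans (by norm_num) (le_max_left _ _)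
    have h4 : max (1/2:ℝ) (1 - M) ≤ 1 := max_le (by norm_num) (by linarith [hM.1])
    constructor
    · have := mul_nonneg (by linarith [hv.2] : (0:ℝ) ≤ 1 - v) h1
      have := mul_nonneg hv.1 h3
      linarith
    · nlinarith [hv.1, hv.2]

lemma Ve_fixed {S : Type*} [Fintype S] (R : S → S → Prop) [DecidableRel R]
    (V0 : S → ℝ) (Ve : S → ℝ)
    (hconv : ∀ Z : S, Filter.Tendsto (fun i => grSeq R V0 i Z) Filter.atTop (nhds (Ve Z)))
    (X : S) : Ve X = grStep R Ve X := by
  have hM : Filter.Tendsto (fun i => attMax R (grSeq R V0 i) X) Filter.atTop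
      (nhds (attMax R Ve X)) :=
    fold_max_tendsto' _ _ _ (fun x _ => hconv x)
  have hstep : Filter.Tendsto (fun i => grSeq R V0 (i+1) X) Filter.atTop
      (nhds (grStep R Ve X)) := by
    simp only [grSeq, grStep]
    exact ((tendsto_const_nhds.sub (hconv X)).mul
      (tendsto_const_nhds.min (tendsto_const_nhds.sub hM))).add
      ((hconv X).mul (tendsto_const_nhds.max (tendsto_const_nhds.sub hM)))
  have hshift : Filter.Tendsto (fun i => grSeq R V0 (i+1) X) Filter.atTop (nhds (Ve X)) :=
    (hconv X).comp (Filter.tendsto_add_atTop_nat 1)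
  exact tendsto_nhds_unique hshift hstep

theorem stmt15 [Fintype S] [Nonempty S] (R : S → S → Prop) [DecidableRel R]
    (V0 : S → ℝ) (hV0 : ∀ X, V0 X ∈ Set.Icc (0:ℝ) 1)
    (Ve : S → ℝ)
    (hconv : ∀ Z : S, Tendsto (fun i => grSeq R V0 i Z) atTop (nhds (Ve Z))) :
    ∀ X : S,
      ((∀ Y, R Y X → Ve Y = 0) → Ve X = 1) ∧
      ((∃ Y, R Y X ∧ Ve Y = 1) → Ve X = 0) := by
  intro X
  have hVe : ∀ Z, Ve Z ∈ Set.Icc (0:ℝ) 1 := by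
    intro Z
    constructor
    · exact le_of_tendsto_of_tendsto' tendsto_const_nhds (hconv Z)
        (fun i => (grSeq_mem R V0 hV0 i Z).1)
    · exact le_of_tendsto_of_tendsto' (hconv Z) tendsto_const_nhds
        (fun i => (grSeq_mem R V0 hV0 i Z).2)
  have hfix := Ve_fixed R V0 Ve hconv X
  constructor
  · intro h0
    have hM : attMax R Ve X = 0 := by
      apply le_antisymm
      · exact (Finset.fold_max_le _).mpr ⟨le_rfl, fun x hx => by
          rw [h0 x (by simpa using hx)]⟩
      · exact (Finset.le_fold_max _).mpr (Or.inl le_rfl)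
    rw [grStep, hM] at hfix
    norm_num at hfix
    linarith
  · rintro ⟨Y, hRY, hY1⟩
    have hM : attMax R Ve X = 1 := by
      apply le_antisymm
      · exact (Finset.fold_max_le _).mpr ⟨zero_le_one, fun x _ => (hVe x).2⟩
      · exact (Finset.le_fold_max _).mpr (Or.inr ⟨Y, by simpa using hRY, le_of_eq hY1.symm⟩)
    rw [grStep, hM] at hfix
    norm_num at hfix
    linarith
end
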